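/- arXiv:1306.6399 — 3 statements merged into one kernel-verified Lean document; each statement's English description precedes it below -/
import Mathlib

section
/- Let 𝔽 be ℝ or ℂ and let D ∈ 𝔽^{d×n} be a dictionary of full row rank. If A ∈ 𝔽^{m×d} satisfies the strong D-null space property of order s (with some constant c > 0), and v is any column of D, then A satisfies the strong [D, v]-null space property of the same order s (with the same constant c), where [D, v] is the d×(n+1) matrix obtained by appending the column v to D. -/
open scoped BigOperators

section Defs

variable {𝕜 : Type*}

/-- ℓ¹ norm of a finitely-indexed vector. -/
noncomputable def norm1 [RCLike 𝕜] {ι : Type*} [Fintype ι] (x : ι → 𝕜) : ℝ :=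
  ∑ i, ‖x i‖

/-- ℓ² norm of a finitely-indexed vector. -/
noncomputable def norm2 [RCLike 𝕜] {ι : Type*} [Fintype ι] (x : ι → 𝕜) : ℝ :=
  Real.sqrt (∑ i, ‖x i‖ ^ 2)

/-- Restriction of a vector to an index set `T` (zero outside `T`). -/
def restr [Zero 𝕜] {ι : Type*} [DecidableEq ι] (T : Finset ι) (x : ι → 𝕜) : ι → 𝕜 :=
  fun i => if i ∈ T then x i else 0

/-- `x` has at most `s` nonzero entries. -/
def sparse [Zero 𝕜] {ι : Type*} (s : ℕ) (x : ι → 𝕜) : Prop :=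
  {i | x i ≠ 0}.ncard ≤ s

/-- Null space property of order `s`. -/
def NSP [RCLike 𝕜] {m : ℕ} {ι : Type*} [Fintype ι] [DecidableEq ι]
    (M : Matrix (Fin m) ι 𝕜) (s : ℕ) : Prop :=
  ∀ v : ι → 𝕜, M.mulVec v = 0 → v ≠ 0 →
    ∀ T : Finset ι, T.card ≤ s → norm1 (restr T v) < norm1 (restr Tᶜ v)

/-- `D`-null space property of order `s`. -/
def DNSP [RCLike 𝕜] {m d : ℕ} {ι : Type*} [Fintype ι] [DecidableEq ι]
    (A : Matrix (Fin m) (Fin d) 𝕜) (D : Matrix (Fin d) ι 𝕜) (s : ℕ) : Prop :=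
  ∀ T : Finset ι, T.card ≤ s →
    ∀ v : ι → 𝕜, A.mulVec (D.mulVec v) = 0 → D.mulVec v ≠ 0 →
      ∃ u : ι → 𝕜, D.mulVec u = 0 ∧ norm1 (restr T v + u) < norm1 (restr Tᶜ v)

/-- Strong `D`-null space property of order `s` with constant `c`. -/
def SNSPc [RCLike 𝕜] {m d : ℕ} {ι : Type*} [Fintype ι] [DecidableEq ι]
    (A : Matrix (Fin m) (Fin d) 𝕜) (D : Matrix (Fin d) ι 𝕜) (s : ℕ) (c : ℝ) : Prop :=
  ∀ v : ι → 𝕜, A.mulVec (D.mulVec v) = 0 →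
    ∀ T : Finset ι, T.card ≤ s →
      ∃ u : ι → 𝕜, D.mulVec u = 0 ∧
        c * norm2 (D.mulVec v) ≤ norm1 (restr Tᶜ v) - norm1 (restr T v + u)

/-- Smallest positive singular value of a matrix: the infimum of the set of positive `σ`
such that `σ²` is an eigenvalue of `Mᴴ M`. -/
noncomputable def nuSV [RCLike 𝕜] {κ ι : Type*} [Fintype κ] [Fintype ι]
    (M : Matrix κ ι 𝕜) : ℝ :=
  sInf {σ : ℝ | 0 < σ ∧ ∃ v : ι → 𝕜, v ≠ 0 ∧ (M.conjTranspose * M).mulVec v = ((σ : 𝕜) ^ 2) • v}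

/-- ℓ¹ error of the best `s`-term approximation. -/
noncomputable def sigmaS [RCLike 𝕜] {ι : Type*} [Fintype ι] (s : ℕ) (x : ι → 𝕜) : ℝ :=
  sInf {r : ℝ | ∃ v : ι → 𝕜, sparse s v ∧ r = norm1 (x - v)}

/-- Spectral norm (ℓ² → ℓ² operator norm). -/
noncomputable def specNorm [RCLike 𝕜] {m d : ℕ} (A : Matrix (Fin m) (Fin d) 𝕜) : ℝ :=
  sSup {r : ℝ | ∃ x : Fin d → 𝕜, norm2 x ≤ 1 ∧ r = norm2 (A.mulVec x)}

/-- ℓ¹ → ℓ² operator norm: the maximal ℓ² norm of a column. -/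
noncomputable def norm12 [RCLike 𝕜] {d : ℕ} {ι : Type*} [Fintype ι]
    (M : Matrix (Fin d) ι 𝕜) : ℝ :=
  sSup {r : ℝ | ∃ j : ι, r = norm2 (fun i => M i j)}

end Defs

/-! Reindexing columns along `σ : κ → ι` gives `(D.submatrix id σ) v = D (σ₊ v)`, where `σ₊ v`
sums `v` over the fibres of `σ`. Apply the property of `D` to `σ₊ v` and `σ(T)` to get `u`, and
pick a section `r` of `σ`. Then `u' = r₊ (u + σ₊ v_T) - v_T` lies in the kernel because
`σ₊ r₊ = id`, and `v_T + u' = r₊ (u + σ₊ v_T)`; the triangle inequality at each point of `σ(T)`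
together with `‖σ₊ x‖₁ ≤ ‖x‖₁` compares the two ℓ¹ expressions. Appending the column `D j₀` is the
case `σ = Fin.snoc id j₀`. -/

open Finset

section Pushforward

variable {ι κ M : Type*} [Fintype κ] [DecidableEq ι]

def pushforward [AddCommMonoid M] (σ : κ → ι) (x : κ → M) : ι → M :=
  fun i => ∑ k with σ k = i, x k

theorem pushforward_add [AddCommMonoid M] (σ : κ → ι) (x y : κ → M) :
    pushforward σ (x + y) = pushforward σ x + pushforward σ y := by
  funext i
  simp only [pushforward, Pi.add_apply, sum_add_distrib]

theorem pushforward_sub [AddCommGroup M] (σ : κ → ι) (x y : κ → M) :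
    pushforward σ (x - y) = pushforward σ x - pushforward σ y := by
  funext i
  simp only [pushforward, Pi.sub_apply, sum_sub_distrib]

theorem pushforward_pushforward_of_leftInverse [AddCommMonoid M] [Fintype ι] [DecidableEq κ]
    {σ : κ → ι} {r : ι → κ} (h : Function.LeftInverse σ r) (x : ι → M) :
    pushforward σ (pushforward r x) = x := by
  funext i
  simp only [pushforward]
  rw [sum_fiberwise_eq_sum_filter]
  simp [h _, sum_filter]

theorem pushforward_restr_apply_of_notMem_image [AddCommMonoid M] [DecidableEq κ]
    {T : Finset κ} {σ : κ → ι} {i : ι} (hi : i ∉ T.image σ) (x : κ → M) :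
    pushforward σ (restr T x) i = 0 :=
  sum_eq_zero fun k hk => if_neg fun hkT => hi (mem_image.2 ⟨k, hkT, (mem_filter.1 hk).2⟩)

end Pushforward

theorem restr_add_restr_compl {ι M : Type*} [Fintype ι] [DecidableEq ι] [AddZeroClass M]
    (T : Finset ι) (x : ι → M) : restr T x + restr Tᶜ x = x := by
  funext i
  by_cases hi : i ∈ T <;> simp [restr, hi]

theorem Matrix.submatrix_mulVec_eq_mulVec_pushforward {𝕜 ι κ : Type*} [CommSemiring 𝕜]
    [Fintype ι] [Fintype κ] [DecidableEq ι] {d : ℕ} (D : Matrix (Fin d) ι 𝕜) (σ : κ → ι)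
    (x : κ → 𝕜) : (D.submatrix id σ).mulVec x = D.mulVec (pushforward σ x) := by
  funext i
  simp only [Matrix.mulVec, dotProduct, pushforward, mul_sum, Matrix.submatrix_apply, id]
  rw [← sum_fiberwise univ σ]
  refine sum_congr rfl fun j _ => sum_congr rfl fun k hk => ?_
  rw [(mem_filter.1 hk).2]

section Norm1

variable {𝕜 ι κ : Type*} [RCLike 𝕜] [Fintype ι] [Fintype κ] [DecidableEq ι]

theorem norm1_pushforward_le (σ : κ → ι) (x : κ → 𝕜) : norm1 (pushforward σ x) ≤ norm1 x :=
  calc norm1 (pushforward σ x) ≤ ∑ i, ∑ k with σ k = i, ‖x k‖ :=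
        sum_le_sum fun _ _ => norm_sum_le _ _
    _ = norm1 x := sum_fiberwise univ σ _

theorem norm1_restr_compl_sub_norm1_restr_add_le {T : Finset ι} {a : ι → 𝕜}
    (ha : ∀ i ∉ T, a i = 0) (b u : ι → 𝕜) :
    norm1 (restr Tᶜ (a + b)) - norm1 (restr T (a + b) + u) ≤ norm1 b - norm1 (u + a) := by
  simp only [norm1, ← sum_sub_distrib]
  refine sum_le_sum fun i _ => ?_
  by_cases hi : i ∈ T
  · have := norm_sub_le (a i + b i + u i) (b i)
    simp only [restr, mem_compl, hi, Pi.add_apply, if_true, not_true, if_false, norm_zero]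
    rw [show a i + b i + u i - b i = u i + a i by ring] at this
    linarith
  · simp [restr, hi, ha i hi]

end Norm1

theorem SNSPc.submatrix {𝕜 ι κ : Type*} [RCLike 𝕜] [Fintype ι] [Fintype κ] [DecidableEq ι]
    [DecidableEq κ] {m d s : ℕ} {c : ℝ} {A : Matrix (Fin m) (Fin d) 𝕜}
    {D : Matrix (Fin d) ι 𝕜} (hD : SNSPc A D s c) {σ : κ → ι} (hσ : Function.Surjective σ) :
    SNSPc A (D.submatrix id σ) s c := by
  intro v hv T hT
  obtain ⟨r, hr⟩ := hσ.hasRightInverse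
  set a := pushforward σ (restr T v)
  have hw : pushforward σ v = a + pushforward σ (restr Tᶜ v) := by
    rw [← pushforward_add, restr_add_restr_compl]
  rw [Matrix.submatrix_mulVec_eq_mulVec_pushforward] at hv ⊢
  obtain ⟨u, hu, hineq⟩ := hD _ hv (T.image σ) (card_image_le.trans hT)
  refine ⟨pushforward r (u + a) - restr T v, ?_, ?_⟩
  · rw [Matrix.submatrix_mulVec_eq_mulVec_pushforward, pushforward_sub,
      pushforward_pushforward_of_leftInverse hr, add_sub_cancel_right, hu]
  · rw [hw] at hineq
    rw [hw, add_sub_cancel]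
    have hfold := norm1_restr_compl_sub_norm1_restr_add_le (T := T.image σ) (a := a)
      (fun _ hi => pushforward_restr_apply_of_notMem_image hi v) (pushforward σ (restr Tᶜ v)) u
    linarith [norm1_pushforward_le σ (restr Tᶜ v), norm1_pushforward_le r (u + a)]

theorem stmt6_general {𝕜 : Type*} [RCLike 𝕜] {m d n s : ℕ}
    (A : Matrix (Fin m) (Fin d) 𝕜) (D : Matrix (Fin d) (Fin n) 𝕜)
    (c : ℝ) (hSNSP : SNSPc A D s c) (j₀ : Fin n) :
    SNSPc A (Matrix.of fun i => Fin.snoc (fun j => D i j) (D i j₀)) s c := by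
  have hsnoc : (Matrix.of fun i => Fin.snoc (fun j => D i j) (D i j₀) : Matrix _ _ 𝕜) =
      D.submatrix id (Fin.snoc id j₀) := by
    ext i k
    induction k using Fin.lastCases <;> simp
  rw [hsnoc]
  exact hSNSP.submatrix fun j => ⟨j.castSucc, by simp⟩

/-- appending a repeated column to `D` preserves the strong `D`-null space
property, with the same order and constant. -/
theorem stmt6 {𝕜 : Type*} [RCLike 𝕜] {m d n s : ℕ}
    (A : Matrix (Fin m) (Fin d) 𝕜) (D : Matrix (Fin d) (Fin n) 𝕜)
    (hD : Function.Surjective D.mulVec)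
    (c : ℝ) (hc : 0 < c) (hSNSP : SNSPc A D s c) (j₀ : Fin n) :
    SNSPc A (Matrix.of fun i => Fin.snoc (fun j => D i j) (D i j₀)) s c :=
  stmt6_general A D c hSNSP j₀
end

section
/- Let 𝔽 be ℝ or ℂ, A ∈ 𝔽^{m×d}, D ∈ 𝔽^{d×n}. If the matrix A D satisfies the null space property of order s, then there exists a constant c > 0 such that for every v ∈ ker(A D) and every index set T with |T| ≤ s, ‖v_{T^c}‖₁ − ‖v_T‖₁ ≥ c‖v‖₂. Consequently (taking u = 0 and using ‖D v‖₂ ≤ ‖D‖₂‖v‖₂), A satisfies the strong D-null space property of order s. -/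
open scoped BigOperators

/-! On the unit sphere of a closed cone in a finite-dimensional space, which is compact, a continuous
function that is positive there is bounded below by some `c > 0`; if it is positively homogeneous this
becomes `c * ‖x‖ ≤ f x` on the whole cone. Applied to `v ↦ ‖v_{Tᶜ}‖₁ - ‖v_T‖₁` on `ker (A * D)`,
positive off `0` by the NSP, this gives one constant per `T`, and finitely many `T` share one.
The strong `D`-NSP then follows with `u = 0` from `‖D v‖₂ ≤ ‖D‖ ‖v‖₂`. -/

open Filter Topology Matrix

theorem exists_pos_mul_norm_le_of_isClosed_cone {E : Type*} [NormedAddCommGroup E]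
    [NormedSpace ℝ E] [FiniteDimensional ℝ E] {K : Set E} (hK : IsClosed K)
    (hK_smul : ∀ x ∈ K, ∀ t : ℝ, 0 < t → t • x ∈ K) {f : E → ℝ} (hf : Continuous f)
    (hf_smul : ∀ x, ∀ t : ℝ, 0 < t → f (t • x) = t * f x) (hf_pos : ∀ x ∈ K, x ≠ 0 → 0 < f x) :
    ∃ c > 0, ∀ x ∈ K, c * ‖x‖ ≤ f x := by
  obtain ⟨c, hc, hcf⟩ := ((isCompact_sphere (0 : E) 1).inter_right hK).exists_forall_le'
    hf.continuousOn fun x hx => hf_pos x hx.2 (ne_zero_of_mem_unit_sphere ⟨x, hx.1⟩)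
  refine ⟨c, hc, fun x hx => ?_⟩
  rcases eq_or_ne x 0 with rfl | hx0
  · have hf0 : f 0 = 2 * f 0 := by simpa using hf_smul 0 2 two_pos
    simp only [norm_zero, mul_zero]
    linarith
  · have hnx : 0 < ‖x‖ := norm_pos_iff.2 hx0
    have hunit : ‖x‖⁻¹ • x ∈ Metric.sphere (0 : E) 1 ∩ K :=
      ⟨by simp [norm_smul, hnx.ne'], hK_smul x hx _ (inv_pos.2 hnx)⟩
    calc c * ‖x‖ ≤ f (‖x‖⁻¹ • x) * ‖x‖ := by gcongr; exact hcf _ hunit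
      _ = f x := by rw [hf_smul x _ (inv_pos.2 hnx)]; field_simp

section

variable {𝕜 : Type*} [RCLike 𝕜] {ι : Type*} [Fintype ι]

lemma norm2_ofLp (x : EuclideanSpace 𝕜 ι) : norm2 x.ofLp = ‖x‖ := by
  rw [EuclideanSpace.norm_eq]; rfl

lemma norm1_real_smul (t : ℝ) (x : ι → 𝕜) : norm1 (t • x) = |t| * norm1 x := by
  simp [norm1, Finset.mul_sum, norm_smul]

lemma norm2_nonneg (x : ι → 𝕜) : 0 ≤ norm2 x := Real.sqrt_nonneg _

@[fun_prop]
lemma continuous_norm1 : Continuous (norm1 : (ι → 𝕜) → ℝ) := by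
  unfold norm1; fun_prop

open scoped Matrix.Norms.L2Operator in
lemma norm2_mulVec_le {κ : Type*} [Fintype κ] [DecidableEq ι] (D : Matrix κ ι 𝕜) (v : ι → 𝕜) :
    norm2 (D *ᵥ v) ≤ ‖D‖ * norm2 v := by
  simpa [← norm2_ofLp] using D.l2_opNorm_mulVec (WithLp.toLp 2 v)

variable [DecidableEq ι]

omit [Fintype ι] in
lemma restr_real_smul (T : Finset ι) (t : ℝ) (x : ι → 𝕜) : restr T (t • x) = t • restr T x := by
  ext i; by_cases h : i ∈ T <;> simp [restr, h]

omit [Fintype ι] in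
@[fun_prop]
lemma continuous_restr (T : Finset ι) : Continuous (restr T : (ι → 𝕜) → ι → 𝕜) := by
  refine continuous_pi fun i => ?_
  by_cases h : i ∈ T <;> simp only [restr, h, if_true, if_false] <;> fun_prop

lemma exists_pos_mul_norm2_le_of_forall_restr_lt {m : ℕ} (M : Matrix (Fin m) ι 𝕜) (T : Finset ι)
    (hT : ∀ v, M *ᵥ v = 0 → v ≠ 0 → norm1 (restr T v) < norm1 (restr Tᶜ v)) :
    ∃ c > 0, ∀ v, M *ᵥ v = 0 → c * norm2 v ≤ norm1 (restr Tᶜ v) - norm1 (restr T v) := by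
  obtain ⟨c, hc, hcK⟩ := exists_pos_mul_norm_le_of_isClosed_cone
    (K := {x : EuclideanSpace 𝕜 ι | M *ᵥ x.ofLp = 0}) (isClosed_eq (by fun_prop) continuous_const)
    (fun x hx t _ => by simp_all [mulVec_smul])
    (f := fun x => norm1 (restr Tᶜ x.ofLp) - norm1 (restr T x.ofLp))
    (by fun_prop)
    (fun x t ht => by simp [restr_real_smul, norm1_real_smul, abs_of_pos ht, mul_sub])
    (fun x hx hx0 => sub_pos.2 (hT _ hx (by simpa using hx0)))
  exact ⟨c, hc, fun v hv => by simpa [← norm2_ofLp] using hcK (WithLp.toLp 2 v) hv⟩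

lemma NSP.exists_pos_mul_norm2_le {m s : ℕ} {M : Matrix (Fin m) ι 𝕜} (hM : NSP M s) :
    ∃ c > 0, ∀ v, M *ᵥ v = 0 → ∀ T : Finset ι, T.card ≤ s →
      c * norm2 v ≤ norm1 (restr Tᶜ v) - norm1 (restr T v) := by
  have hT : ∀ T : Finset ι, ∀ᶠ c in 𝓝[>] (0 : ℝ), T.card ≤ s → ∀ v, M *ᵥ v = 0 →
      c * norm2 v ≤ norm1 (restr Tᶜ v) - norm1 (restr T v) := by
    -- a constant that works for `T` also works for every smaller positive one
    intro T
    by_cases hTs : T.card ≤ s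
    · obtain ⟨c₀, hc₀, hc₀T⟩ :=
        exists_pos_mul_norm2_le_of_forall_restr_lt M T fun v hv hv0 => hM v hv hv0 T hTs
      filter_upwards [Ioc_mem_nhdsGT hc₀] with c hc _ v hv
      exact (mul_le_mul_of_nonneg_right hc.2 (norm2_nonneg v)).trans (hc₀T v hv)
    · exact .of_forall fun _ h => absurd h hTs
  obtain ⟨c, hc, hcT⟩ := (eventually_mem_nhdsWithin.and (eventually_all.2 hT)).exists
  exact ⟨c, hc, fun v hv T hTs => hcT T hTs v hv⟩

open scoped Matrix.Norms.L2Operator in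
lemma exists_pos_snspc_of_forall_mul_norm2_le {m d s : ℕ} {A : Matrix (Fin m) (Fin d) 𝕜}
    {D : Matrix (Fin d) ι 𝕜} {c : ℝ} (hc : 0 < c)
    (h : ∀ v, (A * D) *ᵥ v = 0 → ∀ T : Finset ι, T.card ≤ s →
      c * norm2 v ≤ norm1 (restr Tᶜ v) - norm1 (restr T v)) :
    ∃ c' > 0, SNSPc A D s c' := by
  -- `+ 1` keeps the constant positive when `D = 0`
  refine ⟨c / (‖D‖ + 1), by positivity, fun v hv T hT => ?_⟩
  refine ⟨0, mulVec_zero D, ?_⟩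
  calc c / (‖D‖ + 1) * norm2 (D *ᵥ v) ≤ c / (‖D‖ + 1) * ((‖D‖ + 1) * norm2 v) := by
        gcongr
        linarith [norm2_mulVec_le D v, norm2_nonneg v]
    _ = c * norm2 v := by field_simp
    _ ≤ norm1 (restr Tᶜ v) - norm1 (restr T v + 0) := by
        rw [add_zero]
        exact h v (by rwa [← mulVec_mulVec]) T hT

end

/-- if `A D` has `s`-NSP then the null-space inequality holds with a uniform
constant, and consequently `A` satisfies the strong `D`-null space property of order `s`. -/
theorem stmt8 {𝕜 : Type*} [RCLike 𝕜] {m d n s : ℕ}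
    (A : Matrix (Fin m) (Fin d) 𝕜) (D : Matrix (Fin d) (Fin n) 𝕜)
    (hNSP : NSP (A * D) s) :
    (∃ c : ℝ, 0 < c ∧ ∀ v : Fin n → 𝕜, (A * D).mulVec v = 0 →
      ∀ T : Finset (Fin n), T.card ≤ s →
        c * norm2 v ≤ norm1 (restr Tᶜ v) - norm1 (restr T v)) ∧
    (∃ c : ℝ, 0 < c ∧ SNSPc A D s c) := by
  obtain ⟨c, hc, hcT⟩ := hNSP.exists_pos_mul_norm2_le
  exact ⟨⟨c, hc, hcT⟩, exists_pos_snspc_of_forall_mul_norm2_le hc hcT⟩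
end

section
/- Fix a dictionary D ∈ ℝ^{d×n} of full row rank and a matrix A ∈ ℝ^{m×d} satisfying the D-null space property of order s. Fix an index set T with |T| ≤ s and a vector v ∈ ℝ^n with D v ∈ ker A \ {0}. For u ∈ ker D and t > 0 define f_v(u, t) = (1/t) · sup_{ũ ∈ ker D} ( ‖(t v + u)_{T^c}‖₁ − ‖(t v + u)_T + ũ‖₁ ). Then inf { f_v(u, t) : u ∈ ker D, t > 0 } > 0. -/
/-!
By homogeneity in `t` it suffices to bound `‖w_Tᶜ‖₁ - dist₁(w_T, ker D)` from below by a positive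
constant on the affine space `v + ker D`, where the `D`-null space property makes it positive at
every point. The ℓ¹ norm is the maximum of the finitely many functionals `x ↦ σ ⬝ᵥ x` with signs
`σ i = ±1`, and Fourier–Motzkin elimination shows that minimising a finite maximum of affine
functions over some of its variables gives again a finite maximum of affine functions, the minimum
being attained. So `dist₁(·, ker D)` is a finite maximum of affine maps, the function to bound is a
finite minimum of finite maxima of affine functions, and each of these attains its infimum.
-/

open scoped BigOperators

lemma Finset.exists_between_of_forall_le {α : Type*} [LinearOrder α] [Nonempty α]
    {L U : Finset α} (h : ∀ l ∈ L, ∀ u ∈ U, l ≤ u) : ∃ s, (∀ l ∈ L, l ≤ s) ∧ ∀ u ∈ U, s ≤ u := by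
  by_cases hL : L.Nonempty
  · exact ⟨L.max' hL, L.le_max', fun u hu => h _ (L.max'_mem hL) u hu⟩
  by_cases hU : U.Nonempty
  · exact ⟨U.min' hU, fun l hl => h l hl _ (U.min'_mem hU), U.min'_le⟩
  simp only [Finset.not_nonempty_iff_eq_empty] at hL hU
  simp [hL, hU]

section MaxAffine

variable {E V W : Type*} [AddCommGroup E] [Module ℝ E] [AddCommGroup V] [Module ℝ V]
  [AddCommGroup W] [Module ℝ W]

open scoped Classical

/-- Reading a finite set of affine maps as their pointwise maximum, `G` at `x` is the minimum over
`t` of `F` at `(x, t)`, and this minimum is attained. -/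
def IsMinOverSnd (F : Finset (E × V →ᵃ[ℝ] ℝ)) (G : Finset (E →ᵃ[ℝ] ℝ)) : Prop :=
  ∀ x, (∀ t, ∀ g ∈ G, ∃ f ∈ F, g x ≤ f (x, t)) ∧ ∃ t, ∃ g ∈ G, ∀ f ∈ F, f (x, t) ≤ g x

lemma exists_nonneg_of_image_comp {E' : Type*} [AddCommGroup E'] [Module ℝ E']
    {F : Finset (E →ᵃ[ℝ] ℝ)} (hF : ∀ x, ∃ f ∈ F, 0 ≤ f x) (φ : E' →ᵃ[ℝ] E) (y : E') :
    ∃ f ∈ F.image (·.comp φ), 0 ≤ f y :=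
  let ⟨f, hf, h⟩ := hF (φ y)
  ⟨f.comp φ, Finset.mem_image_of_mem _ hf, h⟩

namespace IsMinOverSnd

variable {F : Finset (E × V →ᵃ[ℝ] ℝ)} {G : Finset (E →ᵃ[ℝ] ℝ)}

lemma exists_nonneg (h : IsMinOverSnd F G) (hF : ∀ p, ∃ f ∈ F, 0 ≤ f p) (x : E) :
    ∃ g ∈ G, 0 ≤ g x := by
  obtain ⟨t, g, hg, hle⟩ := (h x).2
  obtain ⟨f, hf, h0⟩ := hF (x, t)
  exact ⟨g, hg, h0.trans (hle f hf)⟩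

lemma of_comp_surjective (L : W →ₗ[ℝ] V) (hL : Function.Surjective L)
    (h : IsMinOverSnd (F.image (·.comp (LinearMap.id.prodMap L).toAffineMap)) G) :
    IsMinOverSnd F G := by
  intro x
  refine ⟨fun t g hg => ?_, ?_⟩
  · obtain ⟨w, rfl⟩ := hL t
    obtain ⟨_, hf', hle⟩ := (h x).1 w g hg
    obtain ⟨f, hf, rfl⟩ := Finset.mem_image.1 hf'
    exact ⟨f, hf, hle⟩
  · obtain ⟨w, g, hg, hle⟩ := (h x).2
    exact ⟨L w, g, hg, fun f hf => hle _ (Finset.mem_image_of_mem _ hf)⟩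

lemma trans {F : Finset (E × (V × W) →ᵃ[ℝ] ℝ)} {G' : Finset (E × V →ᵃ[ℝ] ℝ)}
    (h₁ : IsMinOverSnd (F.image (·.comp (AffineEquiv.prodAssoc ℝ E V W).toAffineMap)) G')
    (h₂ : IsMinOverSnd G' G) : IsMinOverSnd F G := by
  intro x
  refine ⟨fun ⟨v, w⟩ g hg => ?_, ?_⟩
  · obtain ⟨g', hg', hle₁⟩ := (h₂ x).1 v g hg
    obtain ⟨_, hf', hle₂⟩ := (h₁ (x, v)).1 w g' hg'
    obtain ⟨f, hf, rfl⟩ := Finset.mem_image.1 hf'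
    exact ⟨f, hf, hle₁.trans hle₂⟩
  · obtain ⟨v, g, hg, hle₁⟩ := (h₂ x).2
    obtain ⟨w, g', hg', hle₂⟩ := (h₁ (x, v)).2
    exact ⟨(v, w), g, hg, fun f hf => (hle₂ _ (Finset.mem_image_of_mem _ hf)).trans (hle₁ g' hg')⟩

end IsMinOverSnd

end MaxAffine

section FourierMotzkin

variable {E : Type*} [AddCommGroup E] [Module ℝ E]

open scoped Classical

def atSndZero (f : E × ℝ →ᵃ[ℝ] ℝ) : E →ᵃ[ℝ] ℝ :=
  f.comp (LinearMap.inl ℝ E ℝ).toAffineMap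

def sndSlope (f : E × ℝ →ᵃ[ℝ] ℝ) : ℝ :=
  f.linear (0, 1)

lemma apply_eq_atSndZero_add (f : E × ℝ →ᵃ[ℝ] ℝ) (x : E) (s : ℝ) :
    f (x, s) = atSndZero f x + sndSlope f * s := by
  have hxs : ((x, s) : E × ℝ) = s • ((0 : E), (1 : ℝ)) +ᵥ ((x, 0) : E × ℝ) := by
    ext <;> simp
  rw [hxs, AffineMap.map_vadd, map_smul, smul_eq_mul, vadd_eq_add, mul_comm, add_comm]
  rfl

/-- The combination of `p` and `n` in which the last variable cancels; it is a convex combination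
when `p` increases and `n` decreases in that variable. -/
noncomputable def fmCombination (p n : E × ℝ →ᵃ[ℝ] ℝ) : E →ᵃ[ℝ] ℝ :=
  (sndSlope p - sndSlope n)⁻¹ • (sndSlope p • atSndZero n - sndSlope n • atSndZero p)

lemma fmCombination_le_max {p n : E × ℝ →ᵃ[ℝ] ℝ} (hp : 0 < sndSlope p) (hn : sndSlope n < 0)
    (x : E) (s : ℝ) : fmCombination p n x ≤ max (p (x, s)) (n (x, s)) := by
  have hpn : 0 < sndSlope p - sndSlope n := by linarith
  have hcomb : fmCombination p n x =
      (sndSlope p - sndSlope n)⁻¹ * (sndSlope p * n (x, s) - sndSlope n * p (x, s)) := by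
    simp only [fmCombination, AffineMap.coe_smul, AffineMap.coe_sub, Pi.smul_apply,
      Pi.sub_apply, smul_eq_mul, apply_eq_atSndZero_add p x, apply_eq_atSndZero_add n x]
    ring
  rw [hcomb, inv_mul_le_iff₀ hpn]
  nlinarith [le_max_left (p (x, s)) (n (x, s)), le_max_right (p (x, s)) (n (x, s))]

noncomputable def fourierMotzkin (F : Finset (E × ℝ →ᵃ[ℝ] ℝ)) : Finset (E →ᵃ[ℝ] ℝ) :=
  (F.filter fun f => sndSlope f = 0).image atSndZero ∪
    ((F ×ˢ F).filter fun pn => 0 < sndSlope pn.1 ∧ sndSlope pn.2 < 0).image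
      fun pn => fmCombination pn.1 pn.2

variable {F : Finset (E × ℝ →ᵃ[ℝ] ℝ)}

lemma atSndZero_mem_fourierMotzkin {f : E × ℝ →ᵃ[ℝ] ℝ} (hf : f ∈ F) (h0 : sndSlope f = 0) :
    atSndZero f ∈ fourierMotzkin F :=
  Finset.mem_union_left _ (Finset.mem_image_of_mem _ (Finset.mem_filter.2 ⟨hf, h0⟩))

lemma fmCombination_mem_fourierMotzkin {p n : E × ℝ →ᵃ[ℝ] ℝ} (hp : p ∈ F) (hn : n ∈ F)
    (hpos : 0 < sndSlope p) (hneg : sndSlope n < 0) : fmCombination p n ∈ fourierMotzkin F :=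
  Finset.mem_union_right _ (Finset.mem_image.2
    ⟨(p, n), Finset.mem_filter.2 ⟨Finset.mem_product.2 ⟨hp, hn⟩, hpos, hneg⟩, rfl⟩)

lemma exists_le_of_mem_fourierMotzkin {g : E →ᵃ[ℝ] ℝ} (hg : g ∈ fourierMotzkin F) (x : E)
    (s : ℝ) : ∃ f ∈ F, g x ≤ f (x, s) := by
  simp only [fourierMotzkin, Finset.mem_union, Finset.mem_image, Finset.mem_filter,
    Finset.mem_product] at hg
  rcases hg with ⟨f, ⟨hf, h0⟩, rfl⟩ | ⟨⟨p, n⟩, ⟨⟨hp, hn⟩, hpos, hneg⟩, rfl⟩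
  · exact ⟨f, hf, by rw [apply_eq_atSndZero_add, h0, zero_mul, add_zero]⟩
  · rcases max_choice (p (x, s)) (n (x, s)) with h | h
    · exact ⟨p, hp, (fmCombination_le_max hpos hneg x s).trans_eq h⟩
    · exact ⟨n, hn, (fmCombination_le_max hpos hneg x s).trans_eq h⟩

lemma exists_forall_le_of_forall_fourierMotzkin_le (x : E) {M : ℝ}
    (hM : ∀ g ∈ fourierMotzkin F, g x ≤ M) : ∃ s, ∀ f ∈ F, f (x, s) ≤ M := by
  set bound := fun f : E × ℝ →ᵃ[ℝ] ℝ => (M - atSndZero f x) / sndSlope f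
  have hbounds : ∀ l ∈ (F.filter (sndSlope · < 0)).image bound,
      ∀ u ∈ (F.filter (0 < sndSlope ·)).image bound, l ≤ u := by
    simp only [Finset.forall_mem_image, Finset.mem_filter]
    rintro n ⟨hn, hneg⟩ p ⟨hp, hpos⟩
    have hcomb := hM _ (fmCombination_mem_fourierMotzkin hp hn hpos hneg)
    simp only [fmCombination, AffineMap.coe_smul, AffineMap.coe_sub, Pi.smul_apply,
      Pi.sub_apply, smul_eq_mul] at hcomb
    rw [inv_mul_le_iff₀ (by linarith)] at hcomb
    rw [div_le_iff_of_neg hneg]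
    refine le_of_mul_le_mul_right ?_ hpos
    rw [mul_right_comm, div_mul_cancel₀ _ hpos.ne']
    linarith
  obtain ⟨s, hlow, hup⟩ := Finset.exists_between_of_forall_le hbounds
  refine ⟨s, fun f hf => ?_⟩
  rw [apply_eq_atSndZero_add]
  rcases lt_trichotomy (sndSlope f) 0 with hneg | h0 | hpos
  · have := hlow _ (Finset.mem_image_of_mem _ (Finset.mem_filter.2 ⟨hf, hneg⟩))
    rw [div_le_iff_of_neg hneg] at this
    linarith
  · rw [h0, zero_mul, add_zero]
    exact hM _ (atSndZero_mem_fourierMotzkin hf h0)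
  · have := hup _ (Finset.mem_image_of_mem _ (Finset.mem_filter.2 ⟨hf, hpos⟩))
    rw [le_div_iff₀ hpos] at this
    linarith

theorem isMinOverSnd_fourierMotzkin (hF : ∀ p, ∃ f ∈ F, 0 ≤ f p) :
    IsMinOverSnd F (fourierMotzkin F) := by
  intro x
  refine ⟨fun s g hg => exists_le_of_mem_fourierMotzkin hg x s, ?_⟩
  have hne : (fourierMotzkin F).Nonempty := by
    by_contra hempty
    rw [Finset.not_nonempty_iff_eq_empty] at hempty
    have hvacuous : ∀ g ∈ fourierMotzkin F, g x ≤ -1 := by simp [hempty]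
    obtain ⟨s, hs⟩ := exists_forall_le_of_forall_fourierMotzkin_le x hvacuous
    obtain ⟨f, hf, h0⟩ := hF (x, s)
    linarith [hs f hf]
  obtain ⟨g, hg, hmax⟩ := (fourierMotzkin F).exists_max_image (fun g => g x) hne
  obtain ⟨s, hs⟩ := exists_forall_le_of_forall_fourierMotzkin_le x hmax
  exact ⟨s, g, hg, hs⟩

end FourierMotzkin

section Elimination

variable {E V : Type*} [AddCommGroup E] [Module ℝ E] [AddCommGroup V] [Module ℝ V]

open scoped Classical

theorem exists_isMinOverSnd_pi (k : ℕ) (F : Finset (E × (Fin k → ℝ) →ᵃ[ℝ] ℝ))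
    (hF : ∀ p, ∃ f ∈ F, 0 ≤ f p) : ∃ G, IsMinOverSnd F G := by
  induction k generalizing E with
  | zero =>
    -- `Fin 0 → ℝ` is a quotient of `ℝ`, so one elimination step covers this case
    have hL : Function.Surjective (0 : ℝ →ₗ[ℝ] Fin 0 → ℝ) := fun _ => ⟨0, Subsingleton.elim _ _⟩
    exact ⟨_, .of_comp_surjective _ hL
      (isMinOverSnd_fourierMotzkin (exists_nonneg_of_image_comp hF _))⟩
  | succ k ih =>
    set L := (Fin.consLinearEquiv ℝ fun _ : Fin (k + 1) => ℝ).toLinearMap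
    have hF₁ := exists_nonneg_of_image_comp hF (LinearMap.id.prodMap L).toAffineMap
    have hF₂ :=
      exists_nonneg_of_image_comp hF₁ (AffineEquiv.prodAssoc ℝ E ℝ (Fin k → ℝ)).toAffineMap
    obtain ⟨G', hG'⟩ := ih _ hF₂
    exact ⟨_, .of_comp_surjective L (Fin.consLinearEquiv ℝ _).surjective
      (hG'.trans (isMinOverSnd_fourierMotzkin (hG'.exists_nonneg hF₂)))⟩

theorem exists_isMinOverSnd [FiniteDimensional ℝ V] (F : Finset (E × V →ᵃ[ℝ] ℝ))
    (hF : ∀ p, ∃ f ∈ F, 0 ≤ f p) : ∃ G, IsMinOverSnd F G := by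
  set e := (Module.finBasis ℝ V).equivFun.symm
  obtain ⟨G, hG⟩ := exists_isMinOverSnd_pi _ _
    (exists_nonneg_of_image_comp hF (LinearMap.id.prodMap e.toLinearMap).toAffineMap)
  exact ⟨G, hG.of_comp_surjective e.toLinearMap e.surjective⟩

theorem exists_pos_forall_exists_le [FiniteDimensional ℝ V] {F : Finset (V →ᵃ[ℝ] ℝ)}
    (hF : ∀ t, ∃ f ∈ F, 0 < f t) : ∃ ε > 0, ∀ t, ∃ f ∈ F, ε ≤ f t := by
  -- minimise over all of `V`, viewed as the second factor of `Unit × V`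
  set π := (LinearMap.snd ℝ Unit V).toAffineMap
  obtain ⟨G, hG⟩ := exists_isMinOverSnd (F.image (·.comp π))
    (exists_nonneg_of_image_comp (fun t => (hF t).imp fun _ ⟨hf, h⟩ => ⟨hf, h.le⟩) π)
  obtain ⟨t₀, g, hg, hle⟩ := (hG ()).2
  obtain ⟨f₀, hf₀, hpos⟩ := hF t₀
  refine ⟨g (), hpos.trans_le (hle _ (Finset.mem_image_of_mem _ hf₀)), fun t => ?_⟩
  obtain ⟨_, hf', hgf⟩ := (hG ()).1 t g hg
  obtain ⟨f, hf, rfl⟩ := Finset.mem_image.1 hf'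
  exact ⟨f, hf, hgf⟩

end Elimination

section NormOne

variable {ι : Type*} [Fintype ι]

lemma norm1_nonneg {𝕜 : Type*} [RCLike 𝕜] (x : ι → 𝕜) : 0 ≤ norm1 x :=
  Finset.sum_nonneg fun _ _ => norm_nonneg _

lemma norm1_smul {𝕜 : Type*} [RCLike 𝕜] (c : 𝕜) (x : ι → 𝕜) : norm1 (c • x) = ‖c‖ * norm1 x := by
  simp only [norm1, Pi.smul_apply, smul_eq_mul, norm_mul, Finset.mul_sum]

variable [DecidableEq ι]

variable (ι) in
noncomputable def signVectors : Finset (ι → ℝ) :=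
  Fintype.piFinset fun _ => {1, -1}

lemma dotProduct_le_norm1 {σ : ι → ℝ} (hσ : σ ∈ signVectors ι) (x : ι → ℝ) :
    σ ⬝ᵥ x ≤ norm1 x := by
  refine Finset.sum_le_sum fun i _ => ?_
  have hσi : σ i = 1 ∨ σ i = -1 := by simpa [signVectors] using Fintype.mem_piFinset.1 hσ i
  rcases hσi with h | h <;> simp [h, le_abs_self, neg_le_abs]

lemma exists_dotProduct_eq_norm1 (x : ι → ℝ) : ∃ σ ∈ signVectors ι, σ ⬝ᵥ x = norm1 x := by
  refine ⟨fun i => if 0 ≤ x i then 1 else -1,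
    Fintype.mem_piFinset.2 fun i => by split_ifs <;> simp, Finset.sum_congr rfl fun i _ => ?_⟩
  dsimp only
  split_ifs with h
  · simp [abs_of_nonneg h]
  · simp [abs_of_neg (not_le.1 h)]

end NormOne

section Restriction

variable {ι R : Type*} [DecidableEq ι] [Semiring R]

variable (R) in
def restrₗ (T : Finset ι) : (ι → R) →ₗ[R] ι → R where
  toFun := restr T
  map_add' x y := by ext i; simp only [restr, Pi.add_apply]; split_ifs <;> simp
  map_smul' c x := by ext i; simp only [restr, Pi.smul_apply, RingHom.id_apply]; split_ifs <;> simp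

@[simp]
lemma restrₗ_apply (T : Finset ι) (x : ι → R) : restrₗ R T x = restr T x :=
  rfl

end Restriction

section DistanceToSubspace

variable {ι V : Type*} [Fintype ι] [DecidableEq ι] [AddCommGroup V] [Module ℝ V]

open scoped Classical in
theorem exists_max_affineMap_eq_min_norm1_add (K : Submodule ℝ (ι → ℝ)) :
    ∃ G : Finset ((ι → ℝ) →ᵃ[ℝ] ℝ), ∀ y, (∀ k ∈ K, ∀ g ∈ G, g y ≤ norm1 (y + k)) ∧
      ∃ k ∈ K, ∃ g ∈ G, norm1 (y + k) ≤ g y := by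
  set F : Finset ((ι → ℝ) × K →ᵃ[ℝ] ℝ) := (signVectors ι).image fun σ =>
    (dotProductBilin ℝ ℝ σ ∘ₗ (LinearMap.fst ℝ _ _ + K.subtype ∘ₗ LinearMap.snd ℝ _ _)).toAffineMap
  have hF : ∀ p, ∃ f ∈ F, 0 ≤ f p := fun ⟨y, k, _⟩ =>
    let ⟨σ, hσ, heq⟩ := exists_dotProduct_eq_norm1 (y + k)
    ⟨_, Finset.mem_image_of_mem _ hσ, by simpa [heq] using norm1_nonneg (y + k)⟩
  obtain ⟨G, hG⟩ := exists_isMinOverSnd F hF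
  refine ⟨G, fun y => ⟨fun k hk g hg => ?_, ?_⟩⟩
  · obtain ⟨_, hf, hle⟩ := (hG y).1 ⟨k, hk⟩ g hg
    obtain ⟨σ, hσ, rfl⟩ := Finset.mem_image.1 hf
    exact hle.trans (dotProduct_le_norm1 hσ _)
  · obtain ⟨k, g, hg, hle⟩ := (hG y).2
    obtain ⟨σ, hσ, heq⟩ := exists_dotProduct_eq_norm1 (y + (k : ι → ℝ))
    exact ⟨k, k.2, g, hg, heq ▸ hle _ (Finset.mem_image_of_mem _ hσ)⟩

open scoped Classical in
theorem exists_pos_le_norm1_sub [FiniteDimensional ℝ V] (a : V →ᵃ[ℝ] ι → ℝ) (b : V →ᵃ[ℝ] ℝ)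
    (h : ∀ t, b t < norm1 (a t)) : ∃ ε > 0, ∀ t, ε ≤ norm1 (a t) - b t := by
  obtain ⟨ε, hε, hle⟩ := exists_pos_forall_exists_le (F := (signVectors ι).image fun σ =>
    (dotProductBilin ℝ ℝ σ).toAffineMap.comp a - b) fun t =>
      let ⟨σ, hσ, heq⟩ := exists_dotProduct_eq_norm1 (a t)
      ⟨_, Finset.mem_image_of_mem _ hσ, by simpa [heq] using h t⟩
  refine ⟨ε, hε, fun t => ?_⟩
  obtain ⟨_, hf, hεf⟩ := hle t
  obtain ⟨σ, hσ, rfl⟩ := Finset.mem_image.1 hf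
  simpa using hεf.trans (sub_le_sub_right (dotProduct_le_norm1 hσ (a t)) _)

end DistanceToSubspace

section NullSpaceProperty

variable {ι : Type*} [Fintype ι] [DecidableEq ι]

theorem exists_pos_le_norm1_restr_compl_sub (K : Submodule ℝ (ι → ℝ)) (T : Finset ι)
    (v : ι → ℝ) (h : ∀ u ∈ K, ∃ ũ ∈ K, norm1 (restr T (v + u) + ũ) < norm1 (restr Tᶜ (v + u))) :
    ∃ ε > 0, ∀ u ∈ K, ∃ ũ ∈ K, ε ≤ norm1 (restr Tᶜ (v + u)) - norm1 (restr T (v + u) + ũ) := by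
  obtain ⟨G, hG⟩ := exists_max_affineMap_eq_min_norm1_add K
  set part : Finset ι → K →ᵃ[ℝ] ι → ℝ := fun S =>
    AffineMap.const ℝ K (restr S v) + (restrₗ ℝ S ∘ₗ K.subtype).toAffineMap
  have part_apply : ∀ S (u : K), part S u = restr S (v + (u : ι → ℝ)) := fun S u => by
    simp [part, ← restrₗ_apply]
  have hε : ∀ g ∈ G, ∃ ε > 0, ∀ u : K, ε ≤ norm1 (part Tᶜ u) - g.comp (part T) u := by
    intro g hg
    refine exists_pos_le_norm1_sub _ _ fun u => ?_
    obtain ⟨ũ, hũ, hlt⟩ := h u u.2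
    rw [AffineMap.comp_apply, part_apply, part_apply]
    exact ((hG _).1 ũ hũ g hg).trans_lt hlt
  choose! ε hεpos hεle using hε
  have hGne : G.Nonempty := let ⟨_, _, g, hg, _⟩ := (hG 0).2; ⟨g, hg⟩
  refine ⟨G.inf' hGne ε, (Finset.lt_inf'_iff _).2 hεpos, fun u hu => ?_⟩
  obtain ⟨ũ, hũ, g, hg, hle⟩ := (hG (restr T (v + u))).2
  have := hεle g hg ⟨u, hu⟩
  rw [AffineMap.comp_apply, part_apply, part_apply] at this
  exact ⟨ũ, hũ, by linarith [Finset.inf'_le ε hg]⟩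

theorem exists_pos_smul_le_norm1_restr_compl_sub (K : Submodule ℝ (ι → ℝ)) (T : Finset ι)
    (v : ι → ℝ) (h : ∀ u ∈ K, ∃ ũ ∈ K, norm1 (restr T (v + u) + ũ) < norm1 (restr Tᶜ (v + u))) :
    ∃ ε > 0, ∀ t > 0, ∀ u ∈ K, ∃ ũ ∈ K,
      t * ε ≤ norm1 (restr Tᶜ (t • v + u)) - norm1 (restr T (t • v + u) + ũ) := by
  obtain ⟨ε, hε, hle⟩ := exists_pos_le_norm1_restr_compl_sub K T v h
  refine ⟨ε, hε, fun t ht u hu => ?_⟩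
  obtain ⟨ũ, hũ, hεle⟩ := hle (t⁻¹ • u) (K.smul_mem _ hu)
  have hw : t • v + u = t • (v + t⁻¹ • u) := by rw [smul_add, smul_inv_smul₀ ht.ne']
  refine ⟨t • ũ, K.smul_mem t hũ, ?_⟩
  rw [hw, ← restrₗ_apply, ← restrₗ_apply, map_smul, map_smul, ← smul_add, norm1_smul, norm1_smul,
    Real.norm_of_nonneg ht.le, ← mul_sub]
  exact mul_le_mul_of_nonneg_left hεle ht.le

end NullSpaceProperty

theorem stmt19_general {m d n s : ℕ}
    (A : Matrix (Fin m) (Fin d) ℝ) (D : Matrix (Fin d) (Fin n) ℝ)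
    (hDNSP : DNSP A D s)
    (T : Finset (Fin n)) (hT : T.card ≤ s)
    (v : Fin n → ℝ) (hv : A.mulVec (D.mulVec v) = 0) (hv0 : D.mulVec v ≠ 0) :
    0 < sInf {r : ℝ | ∃ u : Fin n → ℝ, ∃ t : ℝ, D.mulVec u = 0 ∧ 0 < t ∧
      r = (1 / t) * sSup {q : ℝ | ∃ ut : Fin n → ℝ, D.mulVec ut = 0 ∧
        q = norm1 (restr Tᶜ (t • v + u)) - norm1 (restr T (t • v + u) + ut)}} := by
  obtain ⟨ε, hε, hεle⟩ := exists_pos_smul_le_norm1_restr_compl_sub (LinearMap.ker D.mulVecLin) T v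
    fun u (hu : D.mulVec u = 0) => hDNSP T hT (v + u) (by rwa [Matrix.mulVec_add, hu, add_zero])
      (by rwa [Matrix.mulVec_add, hu, add_zero])
  refine hε.trans_le (le_csInf ⟨_, 0, 1, D.mulVec_zero, one_pos, rfl⟩ ?_)
  rintro _ ⟨u, t, hu, ht, rfl⟩
  obtain ⟨ũ, hũ, hle⟩ := hεle t ht u hu
  have hbdd : BddAbove {q : ℝ | ∃ ut : Fin n → ℝ, D.mulVec ut = 0 ∧
      q = norm1 (restr Tᶜ (t • v + u)) - norm1 (restr T (t • v + u) + ut)} :=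
    ⟨norm1 (restr Tᶜ (t • v + u)), by
      rintro _ ⟨ut, -, rfl⟩
      linarith [norm1_nonneg (restr T (t • v + u) + ut)]⟩
  rw [one_div, le_inv_mul_iff₀ ht]
  exact hle.trans (le_csSup hbdd ⟨ũ, hũ, rfl⟩)

/-- under `D`-NSP, the infimum of `f_v(u, t)` over `u ∈ ker D` and `t > 0`
is strictly positive. -/
theorem stmt19 {m d n s : ℕ}
    (A : Matrix (Fin m) (Fin d) ℝ) (D : Matrix (Fin d) (Fin n) ℝ)
    (hD : Function.Surjective D.mulVec)
    (hDNSP : DNSP A D s)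
    (T : Finset (Fin n)) (hT : T.card ≤ s)
    (v : Fin n → ℝ) (hv : A.mulVec (D.mulVec v) = 0) (hv0 : D.mulVec v ≠ 0) :
    0 < sInf {r : ℝ | ∃ u : Fin n → ℝ, ∃ t : ℝ, D.mulVec u = 0 ∧ 0 < t ∧
      r = (1 / t) * sSup {q : ℝ | ∃ ut : Fin n → ℝ, D.mulVec ut = 0 ∧
        q = norm1 (restr Tᶜ (t • v + u)) - norm1 (restr T (t • v + u) + ut)}} :=
  stmt19_general A D hDNSP T hT v hv hv0
end
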